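/- Let g : ℝⁿ → ℝ be differentiable, h₁ : ℝⁿ → ℝ ∪ {+∞} a proper lower semicontinuous convex function, τ > 0, and u₁, u₂ ∈ ℝⁿ linearly independent such that B = τI + u₁u₁ᵀ − u₂u₂ᵀ is positive definite with inverse H = B⁻¹. Let x, ξ ∈ ℝⁿ, set x̄ = x − H(∇g(x) − ξ), define ζ(α) = x̄ − (α₁/τ)u₁ + α₂(τI + u₁u₁ᵀ)⁻¹u₂, 𝓛(α) = ( u₁ᵀ(x̄ + α₂(τI + u₁u₁ᵀ)⁻¹u₂ − Prox_{(1/τ)h₁}(ζ(α))) + α₁ , u₂ᵀ(x̄ − Prox_{(1/τ)h₁}(ζ(α))) + α₂ ), and let U = [−u₁, u₂] be the n×2 matrix with columns −u₁ and u₂. Then for every α ∈ ℝ², writing x̂ = Prox_{(1/τ)h₁}(ζ(α)), one has U𝓛(α) − (∇g(x) − ξ) − B(x̂ − x) ∈ ∂h₁(x̂). -/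

import Mathlib

open Matrix Filter Topology RealInnerProductSpace

noncomputable section

/-- `n`-dimensional Euclidean space. -/
abbrev Euc (n : ℕ) := EuclideanSpace ℝ (Fin n)

/-- `v` is a subgradient of the extended-real-valued convex function `φ` at `x`. -/
def ESubgradAt {n : ℕ} (φ : Euc n → EReal) (v x : Euc n) : Prop :=
  ∀ y : Euc n, φ x + ((⟪v, y - x⟫ : ℝ) : EReal) ≤ φ y

/-- `v` is a subgradient of the real-valued convex function `φ` at `x`. -/
def RSubgradAt {n : ℕ} (φ : Euc n → ℝ) (v x : Euc n) : Prop :=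
  ∀ y : Euc n, φ x + ⟪v, y - x⟫ ≤ φ y

/-- Convexity of an extended-real-valued function. -/
def EConvexF {n : ℕ} (φ : Euc n → EReal) : Prop :=
  ∀ x y : Euc n, ∀ a b : ℝ, 0 ≤ a → 0 ≤ b → a + b = 1 →
    φ (a • x + b • y) ≤ (a : EReal) * φ x + (b : EReal) * φ y

/-- Properness of an extended-real-valued function: never `⊥` and finite somewhere. -/
def ProperF {n : ℕ} (φ : Euc n → EReal) : Prop :=
  (∀ x, φ x ≠ ⊥) ∧ (∃ x, φ x ≠ ⊤)

/-- The quadratic form `uᵀ B u`. -/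
def quadF {n : ℕ} (B : Matrix (Fin n) (Fin n) ℝ) (u : Euc n) : ℝ :=
  ⟪u, (Matrix.toEuclideanLin B) u⟫

/-- The scaled norm `‖u‖_B = √(uᵀ B u)`. -/
def MNorm {n : ℕ} (B : Matrix (Fin n) (Fin n) ℝ) (u : Euc n) : ℝ :=
  Real.sqrt (quadF B u)

/-- The objective `f = g + h₁ - h₂`. -/
def fObj {n : ℕ} (g : Euc n → ℝ) (h₁ : Euc n → EReal) (h₂ : Euc n → ℝ) (x : Euc n) : EReal :=
  (g x : EReal) + h₁ x - (h₂ x : EReal)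

/-- `p` is the proximal point `Prox_{(1/τ)h₁}(y)`, i.e. the minimizer of
`(1/τ)h₁(·) + ½‖· - y‖²`. -/
def IsProxPt {n : ℕ} (τ : ℝ) (h₁ : Euc n → EReal) (y p : Euc n) : Prop :=
  ∀ w : Euc n, ((τ⁻¹ : ℝ) : EReal) * h₁ p + ((‖p - y‖ ^ 2 / 2 : ℝ) : EReal) ≤
    ((τ⁻¹ : ℝ) : EReal) * h₁ w + ((‖w - y‖ ^ 2 / 2 : ℝ) : EReal)

/-- The matrix `τI + u₁u₁ᵀ`. -/
def Amat {n : ℕ} (τ : ℝ) (u₁ : Euc n) : Matrix (Fin n) (Fin n) ℝ :=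
  τ • (1 : Matrix (Fin n) (Fin n) ℝ) + Matrix.vecMulVec (u₁ : Fin n → ℝ) (u₁ : Fin n → ℝ)

/-- The matrix `B = τI + u₁u₁ᵀ - u₂u₂ᵀ`. -/
def Bprox {n : ℕ} (τ : ℝ) (u₁ u₂ : Euc n) : Matrix (Fin n) (Fin n) ℝ :=
  Amat τ u₁ - Matrix.vecMulVec (u₂ : Fin n → ℝ) (u₂ : Fin n → ℝ)

/-- `ζ(α) = x̄ - (α₁/τ)u₁ + α₂(τI + u₁u₁ᵀ)⁻¹u₂`. -/
def zetaMap {n : ℕ} (τ : ℝ) (u₁ u₂ xb : Euc n) (α : ℝ × ℝ) : Euc n :=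
  xb - (α.1 / τ) • u₁ + α.2 • (Matrix.toEuclideanLin (Amat τ u₁)⁻¹) u₂

/-- The semi-smooth map `𝓛 : ℝ² → ℝ²`, where `P = Prox_{(1/τ)h₁}`. -/
def Lmap {n : ℕ} (τ : ℝ) (u₁ u₂ xb : Euc n) (P : Euc n → Euc n) (α : ℝ × ℝ) : ℝ × ℝ :=
  (⟪u₁, xb + α.2 • (Matrix.toEuclideanLin (Amat τ u₁)⁻¹) u₂ - P (zetaMap τ u₁ u₂ xb α)⟫ + α.1,
   ⟪u₂, xb - P (zetaMap τ u₁ u₂ xb α)⟫ + α.2)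

/-- `p` is the scaled proximal point `Prox_{h₁}^{B}(y)`, i.e. the minimizer of
`h₁(·) + ½‖· - y‖_B²`. -/
def IsScaledProxPt {n : ℕ} (B : Matrix (Fin n) (Fin n) ℝ) (h₁ : Euc n → EReal)
    (y p : Euc n) : Prop :=
  ∀ w : Euc n, h₁ p + ((quadF B (p - y) / 2 : ℝ) : EReal) ≤
    h₁ w + ((quadF B (w - y) / 2 : ℝ) : EReal)


/-! The residual equals `τ (ζ(α) - x̂)`: expanding `B`, `𝓛` and `ζ`, all terms cancel except the
`α₂`-terms, which are absorbed by `(τI + u₁u₁ᵀ)(τI + u₁u₁ᵀ)⁻¹u₂ = u₂`. And `τ (y - Prox(y))` is a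
subgradient of `h₁` at `Prox(y)`: comparing `Prox(y)` with the points `Prox(y) + t (z - Prox(y))`,
which by convexity have value at most `(1 - t) h₁(Prox(y)) + t h₁(z)`, and letting `t → 0⁺` gives
the subgradient inequality at `z`. -/

section LinearAlgebra

variable {ι : Type*} [Fintype ι] [DecidableEq ι]

theorem toEuclideanLin_vecMulVec_apply (a b v : EuclideanSpace ℝ ι) :
    Matrix.toEuclideanLin (vecMulVec (a : ι → ℝ) (b : ι → ℝ)) v = ⟪b, v⟫ • a := by
  ext i
  simp [Matrix.toLpLin_apply, vecMulVec_mulVec, dotProduct, PiLp.inner_apply, mul_comm]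

theorem toEuclideanLin_mul_nonsing_inv_apply {𝕜 : Type*} [RCLike 𝕜] {M : Matrix ι ι 𝕜}
    (hM : IsUnit M) (v : EuclideanSpace 𝕜 ι) :
    Matrix.toEuclideanLin M (Matrix.toEuclideanLin M⁻¹ v) = v := by
  rw [← LinearMap.comp_apply, ← Matrix.toLpLin_mul_same,
    mul_nonsing_inv _ ((isUnit_iff_isUnit_det M).1 hM), Matrix.toLpLin_one, LinearMap.id_apply]

end LinearAlgebra

section ProximalMatrices

variable {n : ℕ} {τ : ℝ}

theorem toEuclideanLin_Amat_apply (u₁ v : Euc n) :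
    Matrix.toEuclideanLin (Amat τ u₁) v = τ • v + ⟪u₁, v⟫ • u₁ := by
  rw [Amat, map_add, LinearMap.add_apply, map_smul, Matrix.toLpLin_one,
    toEuclideanLin_vecMulVec_apply]
  rfl

theorem toEuclideanLin_Bprox_apply (u₁ u₂ v : Euc n) :
    Matrix.toEuclideanLin (Bprox τ u₁ u₂) v = τ • v + ⟪u₁, v⟫ • u₁ - ⟪u₂, v⟫ • u₂ := by
  rw [Bprox, map_sub, LinearMap.sub_apply, toEuclideanLin_Amat_apply,
    toEuclideanLin_vecMulVec_apply]

theorem Amat_posDef (hτ : 0 < τ) (u₁ : Euc n) : (Amat τ u₁).PosDef :=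
  (PosDef.one.smul hτ).add_posSemidef (posSemidef_vecMulVec_self_star (u₁ : Fin n → ℝ))

theorem Lmap_residual_eq (hτ : τ ≠ 0) {u₁ u₂ x xb d : Euc n}
    (hA : Matrix.toEuclideanLin (Amat τ u₁) (Matrix.toEuclideanLin (Amat τ u₁)⁻¹ u₂) = u₂)
    (hd : Matrix.toEuclideanLin (Bprox τ u₁ u₂) (x - xb) = d) (P : Euc n → Euc n) (α : ℝ × ℝ) :
    -(Lmap τ u₁ u₂ xb P α).1 • u₁ + (Lmap τ u₁ u₂ xb P α).2 • u₂ - d -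
        Matrix.toEuclideanLin (Bprox τ u₁ u₂) (P (zetaMap τ u₁ u₂ xb α) - x) =
      τ • (zetaMap τ u₁ u₂ xb α - P (zetaMap τ u₁ u₂ xb α)) := by
  subst hd
  simp only [Lmap, zetaMap]
  set w := Matrix.toEuclideanLin (Amat τ u₁)⁻¹ u₂
  set q := P (xb - (α.1 / τ) • u₁ + α.2 • w)
  rw [toEuclideanLin_Amat_apply] at hA
  rw [sub_sub, ← map_add, show x - xb + (q - x) = q - xb by abel, toEuclideanLin_Bprox_apply]
  simp only [inner_add_right, inner_sub_right, real_inner_smul_right, smul_sub, smul_add,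
    smul_smul, mul_div_cancel₀ _ hτ]
  linear_combination (norm := module) α.2 • hA.symm

end ProximalMatrices

namespace IsProxPt

variable {n : ℕ} {τ : ℝ} {h : Euc n → EReal} {y p : Euc n}

theorem apply_ne_top (hτ : 0 < τ) (hh : ProperF h) (hp : IsProxPt τ h y p) : h p ≠ ⊤ := by
  obtain ⟨w, hw⟩ := hh.2
  intro htop
  have hle := hp w
  rw [htop, EReal.mul_top_of_pos (by exact_mod_cast inv_pos.2 hτ),
    EReal.top_add_of_ne_bot (EReal.coe_ne_bot _), top_le_iff] at hle
  lift h w to ℝ using ⟨hw, hh.1 w⟩ with c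
  exact EReal.coe_ne_top (τ⁻¹ * c + ‖w - y‖ ^ 2 / 2) (by exact_mod_cast hle)

theorem inv_mul_sub_le (hτ : 0 < τ) (hconv : EConvexF h) (hp : IsProxPt τ h y p)
    {z : Euc n} {a b : ℝ} (ha : h p = a) (hb : h z = b) {t : ℝ} (ht : 0 < t) (ht1 : t ≤ 1) :
    τ⁻¹ * (a - b) ≤ ⟪p - y, z - p⟫ + t * (‖z - p‖ ^ 2 / 2) := by
  have hconv_t : h (p + t • (z - p)) ≤ ((1 - t) * a + t * b : ℝ) := by
    have := hconv p z (1 - t) t (by linarith) ht.le (by ring)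
    rwa [ha, hb, show (1 - t) • p + t • z = p + t • (z - p) by module] at this
  have hprox : τ⁻¹ * a + ‖p - y‖ ^ 2 / 2 ≤
      τ⁻¹ * ((1 - t) * a + t * b) + ‖p + t • (z - p) - y‖ ^ 2 / 2 := by
    have := (hp (p + t • (z - p))).trans (add_le_add_left
      (mul_le_mul_of_nonneg_left hconv_t (by exact_mod_cast (inv_pos.2 hτ).le)) _)
    rw [ha] at this
    exact_mod_cast this
  have hnorm : ‖p + t • (z - p) - y‖ ^ 2 =
      ‖p - y‖ ^ 2 + 2 * t * ⟪p - y, z - p⟫ + t ^ 2 * ‖z - p‖ ^ 2 := by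
    rw [show p + t • (z - p) - y = (p - y) + t • (z - p) by abel, norm_add_sq_real,
      real_inner_smul_right, norm_smul, Real.norm_of_nonneg ht.le]
    ring
  rw [hnorm] at hprox
  have : t * (τ⁻¹ * (a - b)) ≤ t * (⟪p - y, z - p⟫ + t * (‖z - p‖ ^ 2 / 2)) := by
    linear_combination hprox
  exact le_of_mul_le_mul_left this ht

theorem eSubgradAt (hτ : 0 < τ) (hh : ProperF h) (hconv : EConvexF h)
    (hp : IsProxPt τ h y p) : ESubgradAt h (τ • (y - p)) p := by
  intro z
  lift h p to ℝ using ⟨hp.apply_ne_top hτ hh, hh.1 p⟩ with a ha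
  rcases eq_or_ne (h z) ⊤ with hz | hz
  · simp [hz]
  lift h z to ℝ using ⟨hz, hh.1 z⟩ with b hb
  have hlim : τ⁻¹ * (a - b) ≤ ⟪p - y, z - p⟫ := by
    have hT : Tendsto (fun t : ℝ => ⟪p - y, z - p⟫ + t * (‖z - p‖ ^ 2 / 2)) (𝓝[>] 0)
        (𝓝 ⟪p - y, z - p⟫) := by
      have hc : Continuous fun t : ℝ => ⟪p - y, z - p⟫ + t * (‖z - p‖ ^ 2 / 2) := by fun_prop
      simpa using tendsto_nhdsWithin_of_tendsto_nhds (hc.tendsto 0)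
    refine ge_of_tendsto hT ?_
    filter_upwards [Ioc_mem_nhdsGT one_pos] with t ht
    exact hp.inv_mul_sub_le hτ hconv ha.symm hb.symm ht.1 ht.2
  have : a + ⟪τ • (y - p), z - p⟫ ≤ b := by
    rw [real_inner_smul_left, ← neg_sub p y, inner_neg_left]
    nlinarith [(inv_mul_le_iff₀ hτ).1 hlim]
  exact_mod_cast this

end IsProxPt

theorem U_Lmap_residual_subgradient_general
    {n : ℕ} (τ : ℝ) (u₁ u₂ x ξ : Euc n)
    (g' : Euc n → Euc n)
    (h₁ : Euc n → EReal) (P : Euc n → Euc n)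
    (hprop : ProperF h₁) (hconv : EConvexF h₁)
    (hτ : 0 < τ)
    (hpd : (Bprox τ u₁ u₂).PosDef)
    (hP : ∀ y : Euc n, IsProxPt τ h₁ y (P y))
    (xb : Euc n)
    (hxb : xb = x - (Matrix.toEuclideanLin (Bprox τ u₁ u₂)⁻¹) (g' x - ξ)) :
    ∀ α : ℝ × ℝ,
      ESubgradAt h₁
        (-(Lmap τ u₁ u₂ xb P α).1 • u₁ + (Lmap τ u₁ u₂ xb P α).2 • u₂ -
          (g' x - ξ) -
          (Matrix.toEuclideanLin (Bprox τ u₁ u₂)) (P (zetaMap τ u₁ u₂ xb α) - x))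
        (P (zetaMap τ u₁ u₂ xb α)) := by
  intro α
  have hA := toEuclideanLin_mul_nonsing_inv_apply (Amat_posDef hτ u₁).isUnit u₂
  have hd : Matrix.toEuclideanLin (Bprox τ u₁ u₂) (x - xb) = g' x - ξ := by
    rw [hxb, sub_sub_cancel, toEuclideanLin_mul_nonsing_inv_apply hpd.isUnit]
  rw [Lmap_residual_eq hτ.ne' hA hd]
  exact (hP _).eSubgradAt hτ hprop hconv

/-- the residual identity: `U𝓛(α) - (∇g(x) - ξ) - B(x̂ - x)` is a
subgradient of `h₁` at `x̂ = Prox_{(1/τ)h₁}(ζ(α))`, where `x̄ = x - B⁻¹(∇g(x) - ξ)`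
and `U𝓛(α) = -𝓛(α)₁u₁ + 𝓛(α)₂u₂`. -/
theorem U_Lmap_residual_subgradient
    {n : ℕ} (τ : ℝ) (u₁ u₂ x ξ : Euc n)
    (g : Euc n → ℝ) (g' : Euc n → Euc n)
    (h₁ : Euc n → EReal) (P : Euc n → Euc n)
    (hg : ∀ y : Euc n, HasGradientAt g (g' y) y)
    (hprop : ProperF h₁) (hlsc : LowerSemicontinuous h₁) (hconv : EConvexF h₁)
    (hτ : 0 < τ)
    (hind : LinearIndependent ℝ ![u₁, u₂])
    (hpd : (Bprox τ u₁ u₂).PosDef)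
    (hP : ∀ y : Euc n, IsProxPt τ h₁ y (P y))
    (xb : Euc n)
    (hxb : xb = x - (Matrix.toEuclideanLin (Bprox τ u₁ u₂)⁻¹) (g' x - ξ)) :
    ∀ α : ℝ × ℝ,
      ESubgradAt h₁
        (-(Lmap τ u₁ u₂ xb P α).1 • u₁ + (Lmap τ u₁ u₂ xb P α).2 • u₂ -
          (g' x - ξ) -
          (Matrix.toEuclideanLin (Bprox τ u₁ u₂)) (P (zetaMap τ u₁ u₂ xb α) - x))
        (P (zetaMap τ u₁ u₂ xb α)) :=
  U_Lmap_residual_subgradient_general τ u₁ u₂ x ξ g' h₁ P hprop hconv hτ hpd hP xb hxb
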